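/- arXiv:0902.0316 — 7 statements merged into one kernel-verified Lean document; each statement's English description precedes it below -/
import Mathlib

section
/- Let s ≥ 1 be an integer, let 1 ≤ j ≤ s, and let e = (e_1,…,e_s) ∈ ℝ^s with e_i ≥ 0 for all i. Then the partial derivative of 𝔟_j with respect to the first coordinate e_1 is nonnegative at e, i.e. ∂𝔟_j/∂e_1(e) ≥ 0. (Equivalently: for e, e′ ∈ ℝ^s_{≥0} that agree in all coordinates except possibly the first, with e_1 ≥ e′_1, one has 𝔟_j(e) ≥ 𝔟_j(e′).) -/
/-- The rational function `𝔟ⱼ` on `ℝ^s` (only the coordinates `e 1, …, e s` are used):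
`𝔟ⱼ(e) = (∏_{1≤i≤s, i≠j} (i + e₁ + ⋯ + eᵢ)) /
  ((∏_{1≤i≤j−1} ((j−i) + e_{i+1} + ⋯ + e_j)) · (∏_{j+1≤i≤s} ((i−j) + e_{j+1} + ⋯ + e_i)))`. -/
noncomputable def bfrak (s j : ℕ) (e : ℕ → ℝ) : ℝ :=
  (∏ i ∈ (Finset.Icc 1 s).erase j, ((i : ℝ) + ∑ m ∈ Finset.Icc 1 i, e m)) /
    ((∏ i ∈ Finset.Icc 1 (j - 1), ((j : ℝ) - (i : ℝ) + ∑ m ∈ Finset.Icc (i + 1) j, e m)) *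
      ∏ i ∈ Finset.Icc (j + 1) s, ((i : ℝ) - (j : ℝ) + ∑ m ∈ Finset.Icc (j + 1) i, e m))

/-!
Write `dᵢ = i + e₁ + ⋯ + eᵢ`. Every factor of the denominator of `𝔟ⱼ` is a difference `dₖ - dₗ`
with `k, l ≥ 1`, while moving `e₁` by `t` moves every `dᵢ` with `i ≥ 1` by `t`. Hence along the
`e₁`-direction `𝔟ⱼ` is `t ↦ ∏_{i ≠ j} (dᵢ + t) / D` with `D` constant, and on `ℝ^s_{≥0}` all
`dᵢ` are nonnegative and increasing in `i`, so both `D` and the derivative of the numerator are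
nonnegative.
-/

open Finset

theorem hasDerivAt_prod_add {𝕜 ι : Type*} [NontriviallyNormedField 𝕜] [DecidableEq ι]
    (u : Finset ι) (c : ι → 𝕜) (x : 𝕜) :
    HasDerivAt (fun t => ∏ i ∈ u, (c i + t)) (∑ i ∈ u, ∏ k ∈ u.erase i, (c k + x)) x := by
  simpa using HasDerivAt.fun_finsetProd fun i _ => (hasDerivAt_id x).const_add (c i)

theorem lineDeriv_nonneg_of_eq_prod_add_div {E ι : Type*} [AddCommGroup E] [Module ℝ E]
    [DecidableEq ι] {f : E → ℝ} {x v : E} {u : Finset ι} {c : ι → ℝ} {D : ℝ}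
    (hf : ∀ t : ℝ, f (x + t • v) = (∏ i ∈ u, (c i + t)) / D) (hc : ∀ i ∈ u, 0 ≤ c i)
    (hD : 0 ≤ D) : 0 ≤ lineDeriv ℝ f x v := by
  have hderiv : HasLineDerivAt ℝ f ((∑ i ∈ u, ∏ k ∈ u.erase i, (c k + 0)) / D) x v := by
    simp only [HasLineDerivAt, hf]
    exact (hasDerivAt_prod_add u c 0).div_const D
  rw [hderiv.lineDeriv]
  refine div_nonneg (sum_nonneg fun i _ => prod_nonneg fun k hk => ?_) hD
  simpa using hc k (mem_of_mem_erase hk)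

theorem sum_add_smul_single_of_mem {ι R : Type*} [DecidableEq ι] [NonAssocSemiring R]
    {S : Finset ι} {k : ι} (hk : k ∈ S) (e : ι → R) (t : R) :
    ∑ m ∈ S, (e + t • Pi.single k 1 : ι → R) m = ∑ m ∈ S, e m + t := by
  simp [sum_add_distrib, Pi.single_apply, hk]

/-- The degree `dᵢ = i + e₁ + ⋯ + eᵢ` of the pure diagram with `d₀ = 0`. -/
noncomputable def pureDegree (e : ℕ → ℝ) (i : ℕ) : ℝ :=
  i + ∑ m ∈ Icc 1 i, e m

theorem pureDegree_zero (e : ℕ → ℝ) : pureDegree e 0 = 0 := by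
  simp [pureDegree]

theorem pureDegree_sub_pureDegree (e : ℕ → ℝ) {i j : ℕ} (hij : i ≤ j) :
    pureDegree e j - pureDegree e i = (j : ℝ) - i + ∑ m ∈ Icc (i + 1) j, e m := by
  have hsplit := sum_Ioc_consecutive e (Nat.zero_le i) hij
  simp only [← Icc_add_one_left_eq_Ioc, zero_add] at hsplit
  rw [pureDegree, pureDegree, ← hsplit]
  ring

theorem pureDegree_le_pureDegree {s : ℕ} {e : ℕ → ℝ} (he : ∀ m ∈ Icc 1 s, 0 ≤ e m) {i j : ℕ}
    (hij : i ≤ j) (hjs : j ≤ s) : pureDegree e i ≤ pureDegree e j := by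
  have hsum : 0 ≤ ∑ m ∈ Icc (i + 1) j, e m :=
    sum_nonneg fun m hm => he m (Icc_subset_Icc (Nat.le_add_left 1 i) hjs hm)
  have hcast : (i : ℝ) ≤ j := Nat.cast_le.mpr hij
  linarith [pureDegree_sub_pureDegree e hij]

theorem pureDegree_nonneg {s : ℕ} {e : ℕ → ℝ} (he : ∀ m ∈ Icc 1 s, 0 ≤ e m) {i : ℕ}
    (his : i ≤ s) : 0 ≤ pureDegree e i :=
  pureDegree_zero e ▸ pureDegree_le_pureDegree he i.zero_le his

theorem pureDegree_add_smul_single_one (e : ℕ → ℝ) (t : ℝ) {i : ℕ} (hi : 1 ≤ i) :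
    pureDegree (e + t • Pi.single 1 1) i = pureDegree e i + t := by
  rw [pureDegree, pureDegree, sum_add_smul_single_of_mem (mem_Icc.mpr ⟨le_rfl, hi⟩)]
  ring

noncomputable def bfrakDenom (s j : ℕ) (e : ℕ → ℝ) : ℝ :=
  (∏ i ∈ Icc 1 (j - 1), (pureDegree e j - pureDegree e i)) *
    ∏ i ∈ Icc (j + 1) s, (pureDegree e i - pureDegree e j)

theorem bfrak_eq_div_bfrakDenom (s j : ℕ) (e : ℕ → ℝ) :
    bfrak s j e = (∏ i ∈ (Icc 1 s).erase j, pureDegree e i) / bfrakDenom s j e := by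
  rw [bfrak, bfrakDenom]
  congr 2
  · refine prod_congr rfl fun i hi => ?_
    rw [pureDegree_sub_pureDegree e (by grind)]
  · refine prod_congr rfl fun i hi => ?_
    rw [pureDegree_sub_pureDegree e (by grind)]

theorem bfrakDenom_add_smul_single_one (s : ℕ) {j : ℕ} (hj : 1 ≤ j) (e : ℕ → ℝ) (t : ℝ) :
    bfrakDenom s j (e + t • Pi.single 1 1) = bfrakDenom s j e := by
  have hshift {i : ℕ} (hi : 1 ≤ i) := pureDegree_add_smul_single_one e t hi
  rw [bfrakDenom, bfrakDenom]
  congr 1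
  · refine prod_congr rfl fun i hi => ?_
    rw [hshift hj, hshift (mem_Icc.mp hi).1]
    ring
  · refine prod_congr rfl fun i hi => ?_
    rw [hshift hj, hshift (by grind)]
    ring

theorem bfrakDenom_nonneg {s j : ℕ} (hjs : j ≤ s) {e : ℕ → ℝ} (he : ∀ m ∈ Icc 1 s, 0 ≤ e m) :
    0 ≤ bfrakDenom s j e := by
  refine mul_nonneg (prod_nonneg fun i hi => ?_) (prod_nonneg fun i hi => ?_)
  · exact sub_nonneg.mpr (pureDegree_le_pureDegree he (by grind) hjs)
  · exact sub_nonneg.mpr (pureDegree_le_pureDegree he (by grind) (mem_Icc.mp hi).2)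

theorem bfrak_add_smul_single_one (s : ℕ) {j : ℕ} (hj : 1 ≤ j) (e : ℕ → ℝ) (t : ℝ) :
    bfrak s j (e + t • Pi.single 1 1) =
      (∏ i ∈ (Icc 1 s).erase j, (pureDegree e i + t)) / bfrakDenom s j e := by
  rw [bfrak_eq_div_bfrakDenom, bfrakDenom_add_smul_single_one s hj]
  congr 1
  exact prod_congr rfl fun i hi => pureDegree_add_smul_single_one e t (by grind)

theorem bfrak_lineDeriv_first_nonneg_general (s j : ℕ) (hj : 1 ≤ j) (hjs : j ≤ s)
    (e : ℕ → ℝ) (he : ∀ i ∈ Finset.Icc 1 s, 0 ≤ e i) :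
    0 ≤ lineDeriv ℝ (bfrak s j) e (Pi.single 1 1) :=
  lineDeriv_nonneg_of_eq_prod_add_div (bfrak_add_smul_single_one s hj e)
    (fun _ hi => pureDegree_nonneg he (mem_Icc.mp (mem_of_mem_erase hi)).2)
    (bfrakDenom_nonneg hjs he)

/-- The partial derivative of `𝔟ⱼ` with respect to the first coordinate `e₁` is
nonnegative at every point of `ℝ^s_{≥0}`. -/
theorem bfrak_lineDeriv_first_nonneg (s j : ℕ) (hs : 1 ≤ s) (hj : 1 ≤ j) (hjs : j ≤ s)
    (e : ℕ → ℝ) (he : ∀ i ∈ Finset.Icc 1 s, 0 ≤ e i) :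
    0 ≤ lineDeriv ℝ (bfrak s j) e (Pi.single 1 1) :=
  bfrak_lineDeriv_first_nonneg_general s j hj hjs e he
end

section
/- Let s ≥ 1 be an integer, let 1 ≤ j ≤ s and 1 ≤ k ≤ s be integers with k < j, and let e ∈ ℝ^s with all e_i ≥ 0. Then the directional derivative of 𝔟_j at e in the direction u_j − u_k is nonpositive, where u_i denotes the i-th standard basis vector of ℝ^s; that is, (∂/∂e_j − ∂/∂e_k)𝔟_j(e) ≤ 0. -/
open Finset Topology

theorem lineDeriv_nonpos_of_antitoneOn {E : Type*} [AddCommGroup E] [Module ℝ E] {f : E → ℝ}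
    {x v : E} {I : Set ℝ} (hI : I ∈ 𝓝 0) (hf : AntitoneOn (fun t : ℝ => f (x + t • v)) I) :
    lineDeriv ℝ f x v ≤ 0 := by
  rw [lineDeriv, ← derivWithin_of_mem_nhds hI]
  exact hf.derivWithin_nonpos

theorem sum_add_smul_apply {ι : Type*} (e v : ι → ℝ) (S : Finset ι) (t : ℝ) :
    ∑ m ∈ S, (e + t • v) m = ∑ m ∈ S, e m + t * ∑ m ∈ S, v m := by
  simp only [Pi.add_apply, Pi.smul_apply, smul_eq_mul, sum_add_distrib, mul_sum]

section AffineFactor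

variable {ι : Type*} {e v : ι → ℝ} {S : Finset ι} {a : ℝ}

theorem add_sum_add_smul_pos (ha : 1 ≤ a) (he : 0 ≤ ∑ m ∈ S, e m) (hv : |∑ m ∈ S, v m| ≤ 1)
    {t : ℝ} (ht : t ∈ Set.Ioo (-1) 1) : 0 < a + ∑ m ∈ S, (e + t • v) m := by
  have hslope : |t * ∑ m ∈ S, v m| < 1 := by
    rw [abs_mul]
    exact mul_lt_one_of_nonneg_of_lt_one_left (abs_nonneg t) (abs_lt.mpr ht) hv
  rw [sum_add_smul_apply]
  linarith [neg_abs_le (t * ∑ m ∈ S, v m)]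

theorem monotone_add_sum_add_smul (hv : 0 ≤ ∑ m ∈ S, v m) :
    Monotone fun t : ℝ => a + ∑ m ∈ S, (e + t • v) m := by
  intro t₁ t₂ h
  simp only [sum_add_smul_apply]
  nlinarith

theorem antitone_add_sum_add_smul (hv : ∑ m ∈ S, v m ≤ 0) :
    Antitone fun t : ℝ => a + ∑ m ∈ S, (e + t • v) m := by
  intro t₁ t₂ h
  simp only [sum_add_smul_apply]
  nlinarith

end AffineFactor

theorem sum_single_sub_single {ι : Type*} [DecidableEq ι] (S : Finset ι) (j k : ι) :
    ∑ m ∈ S, (Pi.single j 1 - Pi.single k 1 : ι → ℝ) m =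
      (if j ∈ S then 1 else 0) - (if k ∈ S then 1 else 0) := by
  simp only [Pi.sub_apply, sum_sub_distrib, sum_pi_single']

section SingleSubSingle

variable {ι : Type*} [DecidableEq ι] {S : Finset ι} {j k : ι}

theorem abs_sum_single_sub_single_le_one :
    |∑ m ∈ S, (Pi.single j 1 - Pi.single k 1 : ι → ℝ) m| ≤ 1 := by
  rw [sum_single_sub_single]
  split_ifs <;> norm_num

theorem sum_single_sub_single_nonpos (h : j ∈ S → k ∈ S) :
    ∑ m ∈ S, (Pi.single j 1 - Pi.single k 1 : ι → ℝ) m ≤ 0 := by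
  rw [sum_single_sub_single]
  split_ifs <;> simp_all

theorem sum_single_sub_single_nonneg (h : k ∈ S → j ∈ S) :
    0 ≤ ∑ m ∈ S, (Pi.single j 1 - Pi.single k 1 : ι → ℝ) m := by
  rw [sum_single_sub_single]
  split_ifs <;> simp_all

end SingleSubSingle

theorem antitoneOn_bfrak_add_smul_single_sub_single {s j k : ℕ} (hjs : j ≤ s) (hk : 1 ≤ k)
    (hkj : k < j) {e : ℕ → ℝ} (he : ∀ i ∈ Icc 1 s, 0 ≤ e i) :
    AntitoneOn (fun t : ℝ => bfrak s j (e + t • (Pi.single j 1 - Pi.single k 1)))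
      (Set.Ioo (-1) 1) := by
  set v : ℕ → ℝ := Pi.single j 1 - Pi.single k 1
  have he_sum {S : Finset ℕ} (hS : S ⊆ Icc 1 s) : 0 ≤ ∑ m ∈ S, e m :=
    sum_nonneg fun m hm => he m (hS hm)
  have num_pos : ∀ t ∈ Set.Ioo (-1 : ℝ) 1, ∀ i ∈ (Icc 1 s).erase j,
      0 < (i : ℝ) + ∑ m ∈ Icc 1 i, (e + t • v) m := by
    intro t ht i hi
    simp only [mem_erase, mem_Icc] at hi
    exact add_sum_add_smul_pos (by exact_mod_cast hi.2.1)
      (he_sum (Icc_subset_Icc_right hi.2.2)) abs_sum_single_sub_single_le_one ht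
  have num_anti (i : ℕ) : Antitone fun t : ℝ => (i : ℝ) + ∑ m ∈ Icc 1 i, (e + t • v) m :=
    antitone_add_sum_add_smul <| sum_single_sub_single_nonpos fun hjS => by
      simp only [mem_Icc] at hjS ⊢; omega
  have lower_pos : ∀ t ∈ Set.Ioo (-1 : ℝ) 1, ∀ i ∈ Icc 1 (j - 1),
      0 < (j : ℝ) - i + ∑ m ∈ Icc (i + 1) j, (e + t • v) m := by
    intro t ht i hi
    simp only [mem_Icc] at hi
    have hij : (i : ℝ) + 1 ≤ j := by exact_mod_cast (by omega : i + 1 ≤ j)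
    exact add_sum_add_smul_pos (by linarith)
      (he_sum (Icc_subset_Icc (by omega) hjs)) abs_sum_single_sub_single_le_one ht
  have lower_mono (i : ℕ) :
      Monotone fun t : ℝ => (j : ℝ) - i + ∑ m ∈ Icc (i + 1) j, (e + t • v) m :=
    monotone_add_sum_add_smul <| sum_single_sub_single_nonneg fun hkS => by
      simp only [mem_Icc] at hkS ⊢; omega
  have upper_pos : ∀ t ∈ Set.Ioo (-1 : ℝ) 1, ∀ i ∈ Icc (j + 1) s,
      0 < (i : ℝ) - j + ∑ m ∈ Icc (j + 1) i, (e + t • v) m := by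
    intro t ht i hi
    simp only [mem_Icc] at hi
    have hji : (j : ℝ) + 1 ≤ i := by exact_mod_cast hi.1
    exact add_sum_add_smul_pos (by linarith)
      (he_sum (Icc_subset_Icc (by omega) hi.2)) abs_sum_single_sub_single_le_one ht
  have upper_mono (i : ℕ) :
      Monotone fun t : ℝ => (i : ℝ) - j + ∑ m ∈ Icc (j + 1) i, (e + t • v) m :=
    monotone_add_sum_add_smul <| sum_single_sub_single_nonneg fun hkS => by
      simp only [mem_Icc] at hkS; omega
  intro t₁ ht₁ t₂ ht₂ h
  apply div_le_div₀
  · exact prod_nonneg fun i hi => (num_pos t₁ ht₁ i hi).le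
  · exact prod_le_prod (fun i hi => (num_pos t₂ ht₂ i hi).le) fun i _ => num_anti i h
  · exact mul_pos (prod_pos (lower_pos t₁ ht₁)) (prod_pos (upper_pos t₁ ht₁))
  · refine mul_le_mul ?_ ?_ (prod_pos (upper_pos t₁ ht₁)).le
      (prod_pos (lower_pos t₂ ht₂)).le
    · exact prod_le_prod (fun i hi => (lower_pos t₁ ht₁ i hi).le) fun i _ => lower_mono i h
    · exact prod_le_prod (fun i hi => (upper_pos t₁ ht₁ i hi).le) fun i _ => upper_mono i h

theorem bfrak_lineDeriv_j_sub_k_nonpos_general (s j k : ℕ)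
    (hjs : j ≤ s) (hk : 1 ≤ k) (hkj : k < j)
    (e : ℕ → ℝ) (he : ∀ i ∈ Finset.Icc 1 s, 0 ≤ e i) :
    lineDeriv ℝ (bfrak s j) e (Pi.single j 1 - Pi.single k 1) ≤ 0 :=
  lineDeriv_nonpos_of_antitoneOn (Ioo_mem_nhds (by norm_num) (by norm_num))
    (antitoneOn_bfrak_add_smul_single_sub_single hjs hk hkj he)

/-- For `k < j`, the directional derivative of `𝔟ⱼ` in the direction `uⱼ − u_k`
is nonpositive on `ℝ^s_{≥0}`. -/
theorem bfrak_lineDeriv_j_sub_k_nonpos (s j k : ℕ) (hs : 1 ≤ s)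
    (hj : 1 ≤ j) (hjs : j ≤ s) (hk : 1 ≤ k) (hks : k ≤ s) (hkj : k < j)
    (e : ℕ → ℝ) (he : ∀ i ∈ Finset.Icc 1 s, 0 ≤ e i) :
    lineDeriv ℝ (bfrak s j) e (Pi.single j 1 - Pi.single k 1) ≤ 0 :=
  bfrak_lineDeriv_j_sub_k_nonpos_general s j k hjs hk hkj e he
end

section
/- Let s ≥ 1 be an integer, let 1 ≤ j ≤ s and 1 ≤ k ≤ s be integers with k > j + 1, and let e ∈ ℝ^s with all e_i ≥ 0. Then the directional derivative of 𝔟_j at e in the direction u_{j+1} − u_k is nonpositive, where u_i denotes the i-th standard basis vector of ℝ^s; that is, (∂/∂e_{j+1} − ∂/∂e_k)𝔟_j(e) ≤ 0. -/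
/-!
Along `e + t • (u_{j+1} - u_k)` a difference `d_b - d_a` with `a ≤ j` moves by `t` when
`j < b < k` and is constant otherwise. Hence `𝔟ⱼ` restricted to this line is a nonnegative
constant times `∏_{j<i<k} (Aᵢ + t) / (Bᵢ + t)` with `Aᵢ = d_i - d_0 ≥ Bᵢ = d_i - d_j > 0`, a
product of nonnegative nonincreasing functions of `t`.
-/

open Finset

/-- `gap e a b = d_b - d_a` for `d_i = i + e₁ + ⋯ + eᵢ`; every factor of `bfrak` is such a gap. -/
noncomputable def gap (e : ℕ → ℝ) (a b : ℕ) : ℝ :=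
  (b : ℝ) - a + ∑ m ∈ Icc (a + 1) b, e m

theorem bfrak_eq_gap (s j : ℕ) (e : ℕ → ℝ) :
    bfrak s j e = (∏ i ∈ (Icc 1 s).erase j, gap e 0 i) /
      ((∏ i ∈ Icc 1 (j - 1), gap e i j) * ∏ i ∈ Icc (j + 1) s, gap e j i) := by
  simp only [bfrak, gap, Nat.cast_zero, sub_zero, zero_add]

theorem gap_add_gap (e : ℕ → ℝ) {a b c : ℕ} (hab : a ≤ b) (hbc : b ≤ c) :
    gap e a b + gap e b c = gap e a c := by
  simp only [gap, Icc_add_one_left_eq_Ioc, ← sum_Ioc_consecutive e hab hbc]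
  ring

theorem gap_pos {e : ℕ → ℝ} {a b : ℕ} (hab : a < b) (he : ∀ m ∈ Icc (a + 1) b, 0 ≤ e m) :
    0 < gap e a b := by
  have : (a : ℝ) < b := by exact_mod_cast hab
  have := sum_nonneg he
  unfold gap
  linarith

theorem gap_nonneg {e : ℕ → ℝ} {a b : ℕ} (hab : a ≤ b) (he : ∀ m ∈ Icc (a + 1) b, 0 ≤ e m) :
    0 ≤ gap e a b := by
  have : (a : ℝ) ≤ b := by exact_mod_cast hab
  have := sum_nonneg he
  unfold gap
  linarith

theorem gap_add_smul (e v : ℕ → ℝ) (t : ℝ) (a b : ℕ) :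
    gap (e + t • v) a b = gap e a b + t * ∑ m ∈ Icc (a + 1) b, v m := by
  simp only [gap, Pi.add_apply, Pi.smul_apply, smul_eq_mul, sum_add_distrib, ← mul_sum]
  ring

theorem sum_Icc_single_sub_single {a b j k : ℕ} (ha : a ≤ j) (hjk : j + 1 < k) :
    ∑ m ∈ Icc (a + 1) b, (Pi.single (j + 1) 1 - Pi.single k 1 : ℕ → ℝ) m =
      if b ∈ Icc (j + 1) (k - 1) then 1 else 0 := by
  simp only [Pi.sub_apply, sum_sub_distrib, sum_pi_single', mem_Icc]
  split_ifs <;> (try norm_num) <;> omega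

theorem prod_add_mul_ite_mem {ι R : Type*} [DecidableEq ι] [CommSemiring R] {S I : Finset ι}
    (hI : I ⊆ S) (f : ι → R) (t : R) :
    ∏ i ∈ S, (f i + t * if i ∈ I then 1 else 0) = (∏ i ∈ S \ I, f i) * ∏ i ∈ I, (f i + t) := by
  rw [← prod_sdiff hI]
  congr 1 <;> refine prod_congr rfl fun i hi => ?_
  · simp [(mem_sdiff.mp hi).2]
  · simp [hi]

theorem hasDerivAt_add_div_add {a b : ℝ} (hb : b ≠ 0) :
    HasDerivAt (fun t => (a + t) / (b + t)) ((b - a) / b ^ 2) 0 := by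
  refine (((hasDerivAt_id' 0).const_add a).fun_div ((hasDerivAt_id' 0).const_add b)
    (by simpa using hb)).congr_deriv ?_
  simp

theorem deriv_const_mul_prod_add_div_add_nonpos {ι : Type*} (I : Finset ι) {C : ℝ}
    {A B : ι → ℝ} (hC : 0 ≤ C) (hB : ∀ i ∈ I, 0 < B i) (hBA : ∀ i ∈ I, B i ≤ A i) :
    deriv (fun t => C * ∏ i ∈ I, (A i + t) / (B i + t)) 0 ≤ 0 := by
  classical
  have hprod := HasDerivAt.fun_finsetProd (u := I) (x := 0)
    fun i hi => hasDerivAt_add_div_add (a := A i) (hB i hi).ne'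
  rw [(hprod.const_mul C).deriv]
  refine mul_nonpos_of_nonneg_of_nonpos hC (sum_nonpos fun i hi => ?_)
  refine smul_nonpos_of_nonneg_of_nonpos (prod_nonneg fun l hl => ?_)
    (div_nonpos_of_nonpos_of_nonneg (by linarith [hBA i hi]) (sq_nonneg _))
  have hl := mem_of_mem_erase hl
  simp only [add_zero]
  exact div_nonneg (by linarith [hB l hl, hBA l hl]) (hB l hl).le

theorem bfrak_add_smul_single_sub_single {s j k : ℕ} (hks : k ≤ s) (hjk : j + 1 < k)
    (e : ℕ → ℝ) (t : ℝ) :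
    bfrak s j (e + t • (Pi.single (j + 1) 1 - Pi.single k 1)) =
      (∏ i ∈ (Icc 1 s).erase j \ Icc (j + 1) (k - 1), gap e 0 i) /
        ((∏ i ∈ Icc 1 (j - 1), gap e i j) * ∏ i ∈ Icc (j + 1) s \ Icc (j + 1) (k - 1), gap e j i) *
      ∏ i ∈ Icc (j + 1) (k - 1), (gap e 0 i + t) / (gap e j i + t) := by
  have hnum : Icc (j + 1) (k - 1) ⊆ (Icc 1 s).erase j := fun i hi => by
    simp only [mem_Icc, mem_erase] at hi ⊢; omega
  have hden : Icc (j + 1) (k - 1) ⊆ Icc (j + 1) s := Icc_subset_Icc le_rfl (by omega)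
  have hden1 : ∀ i ∈ Icc 1 (j - 1), gap (e + t • (Pi.single (j + 1) 1 - Pi.single k 1)) i j
      = gap e i j := fun i hi => by
    rw [gap_add_smul, sum_Icc_single_sub_single (by simp only [mem_Icc] at hi; omega) hjk]
    simp
  rw [bfrak_eq_gap, prod_congr rfl hden1]
  simp only [gap_add_smul, sum_Icc_single_sub_single (Nat.zero_le j) hjk,
    sum_Icc_single_sub_single le_rfl hjk, prod_add_mul_ite_mem hnum,
    prod_add_mul_ite_mem hden, prod_div_distrib]
  ring

theorem bfrak_lineDeriv_jsucc_sub_k_nonpos_general (s j k : ℕ) (hks : k ≤ s) (hkj : j + 1 < k)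
    (e : ℕ → ℝ) (he : ∀ i ∈ Finset.Icc 1 s, 0 ≤ e i) :
    lineDeriv ℝ (bfrak s j) e (Pi.single (j + 1) 1 - Pi.single k 1) ≤ 0 := by
  have he' : ∀ a b, b ≤ s → ∀ m ∈ Icc (a + 1) b, 0 ≤ e m := fun a b hb m hm =>
    he m (by simp only [mem_Icc] at hm ⊢; omega)
  show deriv (fun t : ℝ => bfrak s j (e + t • _)) 0 ≤ 0
  simp only [bfrak_add_smul_single_sub_single hks hkj]
  refine deriv_const_mul_prod_add_div_add_nonpos _ ?_ (fun i hi => ?_) (fun i hi => ?_)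
  · refine div_nonneg (prod_nonneg fun i hi => ?_) (mul_nonneg (prod_nonneg fun i hi => ?_)
      (prod_nonneg fun i hi => ?_)) <;>
    · simp only [mem_sdiff, mem_erase, mem_Icc] at hi
      exact gap_nonneg (by omega) (he' _ _ (by omega))
  all_goals simp only [mem_Icc] at hi
  · exact gap_pos (by omega) (he' _ _ (by omega))
  · rw [← gap_add_gap e (Nat.zero_le j) (by omega : j ≤ i)]
    linarith [gap_nonneg (Nat.zero_le j) (he' 0 j (by omega))]

/-- For `k > j + 1`, the directional derivative of `𝔟ⱼ` in the direction `u_{j+1} − u_k`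
is nonpositive on `ℝ^s_{≥0}`. -/
theorem bfrak_lineDeriv_jsucc_sub_k_nonpos (s j k : ℕ) (hs : 1 ≤ s)
    (hj : 1 ≤ j) (hjs : j ≤ s) (hk : 1 ≤ k) (hks : k ≤ s) (hkj : j + 1 < k)
    (e : ℕ → ℝ) (he : ∀ i ∈ Finset.Icc 1 s, 0 ≤ e i) :
    lineDeriv ℝ (bfrak s j) e (Pi.single (j + 1) 1 - Pi.single k 1) ≤ 0 :=
  bfrak_lineDeriv_jsucc_sub_k_nonpos_general s j k hks hkj e he
end

section
/- Let s ≥ 1 be an integer and let e = (e_1,…,e_s) ∈ ℝ^s with e_i ≥ 0 for all i and with e_1 ≥ e_2 + e_3 + ⋯ + e_s. Then for every integer 1 ≤ j ≤ s, 𝔟_j(e) ≥ binom(s, j). -/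
open Finset Nat

section Domination

variable {ι κ α : Type*}

theorem Finset.exists_injective_le_of_card_filter_le [LinearOrder α] [DecidableEq κ]
    {S : Finset ι} {T : Finset κ} {d : ι → α} {n : κ → α}
    (h : ∀ r ∈ S, #{r' ∈ S | d r ≤ d r'} ≤ #{i ∈ T | d r ≤ n i}) :
    ∃ f : S → κ, Function.Injective f ∧ ∀ r, f r ∈ T ∧ d r ≤ n (f r) := by
  let t : S → Finset κ := fun r ↦ {i ∈ T | d r ≤ n i}
  suffices hall : ∀ A : Finset S, #A ≤ #(A.biUnion t) by
    obtain ⟨f, hf, hft⟩ := (all_card_le_biUnion_card_iff_exists_injective t).1 hall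
    exact ⟨f, hf, fun r ↦ mem_filter.1 (hft r)⟩
  intro A
  obtain rfl | hA := A.eq_empty_or_nonempty
  · simp
  -- the partners of an element of `A` with least `d` suffice for all of `A`
  obtain ⟨r₀, hr₀A, hr₀⟩ := A.exists_min_image (fun r ↦ d r) hA
  calc #A = #(A.map (Function.Embedding.subtype _)) := (card_map _).symm
    _ ≤ #{r' ∈ S | d r₀ ≤ d r'} := card_le_card fun r hr ↦ by
      obtain ⟨r, hrA, rfl⟩ := mem_map.1 hr
      exact mem_filter.2 ⟨r.2, hr₀ r hrA⟩
    _ ≤ #(t r₀) := h r₀ r₀.2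
    _ ≤ #(A.biUnion t) := card_le_card (subset_biUnion_of_mem t hr₀A)

theorem Finset.prod_le_prod_of_card_filter_le {R : Type*} [CommMonoidWithZero R] [LinearOrder R]
    [ZeroLEOneClass R] [PosMulMono R] [DecidableEq ι] {S : Finset ι} {d n : ι → R}
    (hd : ∀ r ∈ S, 0 ≤ d r) (h : ∀ r ∈ S, #{r' ∈ S | d r ≤ d r'} ≤ #{i ∈ S | d r ≤ n i}) :
    ∏ r ∈ S, d r ≤ ∏ i ∈ S, n i := by
  obtain ⟨f, hf, hfS⟩ := exists_injective_le_of_card_filter_le h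
  have hbij : ∏ r ∈ S.attach, n (f r) = ∏ i ∈ S, n i :=
    prod_nbij f (fun r _ ↦ (hfS r).1) hf.injOn
      (surjOn_of_injOn_of_card_le f (fun r _ ↦ (hfS r).1) hf.injOn card_attach.ge)
      fun _ _ ↦ rfl
  calc ∏ r ∈ S, d r = ∏ r ∈ S.attach, d r := (prod_attach S d).symm
    _ ≤ ∏ r ∈ S.attach, n (f r) := prod_le_prod (fun r _ ↦ hd r r.2) fun r _ ↦ (hfS r).2
    _ = ∏ i ∈ S, n i := hbij

end Domination

theorem Finset.prod_add_eq_prod_mul_prod_one_add_div {ι K : Type*} [Field K] {S : Finset ι}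
    {a b : ι → K} (ha : ∀ i ∈ S, a i ≠ 0) :
    ∏ i ∈ S, (a i + b i) = (∏ i ∈ S, a i) * ∏ i ∈ S, (1 + b i / a i) := by
  rw [← prod_mul_distrib]
  exact prod_congr rfl fun i hi ↦ by field_simp [ha i hi]

theorem Finset.Ico_disjoint_Ioc_same {α : Type*} [Preorder α] [LocallyFiniteOrder α]
    {a b c : α} : Disjoint (Ico a b) (Ioc b c) :=
  disjoint_left.2 fun _ hx hx' ↦ (mem_Ico.1 hx).2.not_gt (mem_Ioc.1 hx').1

theorem Finset.Icc_erase_eq_Ico_union_Ioc {α : Type*} [LinearOrder α] [LocallyFiniteOrder α]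
    {a b c : α} (hab : a ≤ b) (hbc : b ≤ c) : (Icc a c).erase b = Ico a b ∪ Ioc b c := by
  ext x
  simp only [mem_erase, mem_Icc, mem_union, mem_Ico, mem_Ioc]
  grind

theorem Nat.exists_card_filter_Ico_le {p : ℕ → Prop} [DecidablePred p] {a j : ℕ} (haj : a ≤ j)
    (hj : p j) : ∃ i ∈ Icc a j, p i ∧ #{r ∈ Ico a j | p r} ≤ j - i := by
  set P : Finset ℕ := {i ∈ Icc a j | p i}
  have hne : P.Nonempty := ⟨j, by simp [P, haj, hj]⟩
  obtain ⟨hi, hpi⟩ := mem_filter.1 (P.min'_mem hne)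
  refine ⟨_, hi, hpi, ?_⟩
  calc #{r ∈ Ico a j | p r} ≤ #(Ico (P.min' hne) j) := card_le_card fun r hr ↦ by
        obtain ⟨hr, hpr⟩ := mem_filter.1 hr
        have := P.min'_le r (mem_filter.2 ⟨Ico_subset_Icc_self hr, hpr⟩)
        simp only [mem_Ico] at hr ⊢
        omega
    _ = j - P.min' hne := Nat.card_Ico _ _

theorem Nat.exists_card_filter_Ioc_le {p : ℕ → Prop} [DecidablePred p] {j b : ℕ} (hjb : j ≤ b)
    (hj : p j) : ∃ i ∈ Icc j b, p i ∧ #{r ∈ Ioc j b | p r} ≤ i - j := by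
  set P : Finset ℕ := {i ∈ Icc j b | p i}
  have hne : P.Nonempty := ⟨j, by simp [P, hjb, hj]⟩
  obtain ⟨hi, hpi⟩ := mem_filter.1 (P.max'_mem hne)
  refine ⟨_, hi, hpi, ?_⟩
  calc #{r ∈ Ioc j b | p r} ≤ #(Ioc j (P.max' hne)) := card_le_card fun r hr ↦ by
        obtain ⟨hr, hpr⟩ := mem_filter.1 hr
        have := P.le_max' r (mem_filter.2 ⟨Ioc_subset_Icc_self hr, hpr⟩)
        simp only [mem_Ioc] at hr ⊢
        omega
    _ = P.max' hne - j := Nat.card_Ioc _ _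

theorem Finset.prod_Ico_one_sub_eq_factorial (j : ℕ) : ∏ i ∈ Ico 1 j, (j - i) = (j - 1)! := by
  cases j with
  | zero => rfl
  | succ j => simpa using prod_Ico_reflect id 1 (le_succ (j + 1))

theorem Finset.prod_Ioc_sub_eq_factorial {j s : ℕ} (hjs : j ≤ s) :
    ∏ i ∈ Ioc j s, (i - j) = (s - j)! := by
  have := prod_Ico_add' (fun i ↦ i - j) 1 (s - j + 1) j
  simp only [Nat.add_sub_cancel, prod_Ico_id_eq_factorial] at this
  rw [this, ← Icc_add_one_left_eq_Ioc, ← Ico_add_one_right_eq_Icc, add_comm 1 j,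
    add_right_comm, Nat.sub_add_cancel hjs]

theorem cast_choose_eq_prod_div_prod_abs_sub {j s : ℕ} (hj : 1 ≤ j) (hjs : j ≤ s) :
    (s.choose j : ℝ) =
      (∏ i ∈ (Icc 1 s).erase j, (i : ℝ)) / ∏ i ∈ (Icc 1 s).erase j, |(i : ℝ) - j| := by
  have hdist : ∏ i ∈ (Icc 1 s).erase j, |(i : ℝ) - j| = ((j - 1)! * (s - j)! : ℕ) := by
    rw [Icc_erase_eq_Ico_union_Ioc hj hjs, prod_union Ico_disjoint_Ioc_same,
      ← prod_Ico_one_sub_eq_factorial, ← prod_Ioc_sub_eq_factorial hjs, Nat.cast_mul,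
      Nat.cast_prod, Nat.cast_prod]
    congr 1 <;> refine prod_congr rfl fun i hi ↦ ?_
    · rw [mem_Ico] at hi
      rw [Nat.cast_sub hi.2.le, abs_sub_comm, abs_of_nonneg (by simp [hi.2.le])]
    · rw [mem_Ioc] at hi
      rw [Nat.cast_sub hi.1.le, abs_of_nonneg (by simp [hi.1.le])]
  have hfact : (j - 1)! * (s - j)! * j = (s - j)! * j ! := by
    rw [← Nat.mul_factorial_pred (by omega : j ≠ 0)]
    ring
  have hid : (∏ i ∈ (Icc 1 s).erase j, i) * j = s ! := by
    rw [prod_erase_mul _ _ (mem_Icc.2 ⟨hj, hjs⟩), ← Ico_add_one_right_eq_Icc,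
      prod_Ico_id_eq_factorial]
  have hnat : s.choose j * ((j - 1)! * (s - j)!) = ∏ i ∈ (Icc 1 s).erase j, i := by
    refine Nat.eq_of_mul_eq_mul_right (by omega : 0 < j) ?_
    rw [hid, mul_assoc, hfact, ← mul_assoc, mul_right_comm,
      choose_mul_factorial_mul_factorial hjs]
  rw [eq_div_iff (by rw [hdist]; positivity), hdist, ← Nat.cast_mul, hnat, Nat.cast_prod]

noncomputable def prefixSum (e : ℕ → ℝ) (i : ℕ) : ℝ := ∑ m ∈ Icc 1 i, e m

section PrefixSums

variable {s j : ℕ} {e : ℕ → ℝ}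

local notation "E" => prefixSum e

theorem prefixSum_sub_prefixSum {a b : ℕ} (hab : a ≤ b) : E b - E a = ∑ m ∈ Ioc a b, e m := by
  have hIcc (n : ℕ) : Icc 1 n = Ioc 0 n := Icc_add_one_left_eq_Ioc 0 n
  rw [sub_eq_iff_eq_add', prefixSum, prefixSum, hIcc, hIcc,
    sum_Ioc_consecutive e (Nat.zero_le a) hab]

theorem prefixSum_le_prefixSum (he : ∀ i ∈ Icc 1 s, 0 ≤ e i) {a b : ℕ} (hab : a ≤ b) (hbs : b ≤ s) :
    E a ≤ E b := by
  rw [← sub_nonneg, prefixSum_sub_prefixSum hab]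
  exact sum_nonneg fun m hm ↦ he m (by simp only [mem_Ioc, mem_Icc] at hm ⊢; omega)

theorem e_one_le_prefixSum (he : ∀ i ∈ Icc 1 s, 0 ≤ e i) {i : ℕ} (hi : 1 ≤ i) (his : i ≤ s) :
    e 1 ≤ E i := by
  simpa [prefixSum] using prefixSum_le_prefixSum he hi his

theorem prefixSum_sub_prefixSum_le (he : ∀ i ∈ Icc 1 s, 0 ≤ e i)
    (he1 : ∑ i ∈ Icc 2 s, e i ≤ e 1) {a b : ℕ} (ha : 1 ≤ a) (hab : a ≤ b) (hbs : b ≤ s) :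
    E b - E a ≤ e 1 := by
  rw [prefixSum_sub_prefixSum hab]
  refine (sum_le_sum_of_subset_of_nonneg (fun m hm ↦ ?_) fun m hm _ ↦ he m ?_).trans he1
  · simp only [mem_Ioc, mem_Icc] at hm ⊢
    omega
  · simp only [mem_Icc] at hm ⊢
    omega

/-- The two filters select the `r` for which the chord of `E` between `r` and `j` has slope
at least `x`. -/
theorem card_steep_chords_le (he : ∀ i ∈ Icc 1 s, 0 ≤ e i)
    (he1 : ∑ i ∈ Icc 2 s, e i ≤ e 1) (hj : 1 ≤ j) (hjs : j ≤ s) {x : ℝ} (hx : 0 ≤ x) :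
    #{r ∈ Ico 1 j | E r - x * r ≤ E j - x * j} + #{r ∈ Ioc j s | E j - x * j ≤ E r - x * r} ≤
      #{i ∈ (Icc 1 s).erase j | x * i ≤ E i} := by
  obtain ⟨i₁, hi₁, hg₁, ha⟩ :=
    exists_card_filter_Ico_le (p := fun r ↦ E r - x * r ≤ E j - x * j) hj le_rfl
  obtain ⟨i₂, hi₂, hg₂, hb⟩ :=
    exists_card_filter_Ioc_le (p := fun r ↦ E j - x * j ≤ E r - x * r) hjs le_rfl
  rw [mem_Icc] at hi₁ hi₂
  set m := i₂ - i₁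
  have hchord : x * m ≤ E i₂ - E i₁ := by
    rw [Nat.cast_sub (by omega)]
    linarith
  have hm : x * m ≤ e 1 := hchord.trans (prefixSum_sub_prefixSum_le he he1 hi₁.1 (by omega) hi₂.2)
  have hsmall : Icc 1 m ⊆ {i ∈ Icc 1 s | x * i ≤ E i} := fun i hi ↦ by
    rw [mem_Icc] at hi
    refine mem_filter.2 ⟨mem_Icc.2 ⟨hi.1, by omega⟩, ?_⟩
    calc x * i ≤ x * m := by gcongr; exact_mod_cast hi.2
      _ ≤ e 1 := hm
      _ ≤ E i := e_one_le_prefixSum he hi.1 (by omega)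
  rw [filter_erase]
  refine le_trans (by omega : _ ≤ m) ?_
  by_cases hjm : j ≤ m
  · have hi₂Q : i₂ ∈ {i ∈ Icc 1 s | x * i ≤ E i} := by
      refine mem_filter.2 ⟨mem_Icc.2 ⟨by omega, hi₂.2⟩, ?_⟩
      have hi₁m : x * i₁ ≤ x * m := by gcongr; exact_mod_cast (by omega : i₁ ≤ m)
      have hi₁E : e 1 ≤ E i₁ := e_one_le_prefixSum he hi₁.1 (by omega)
      have hsplit : (i₂ : ℝ) = m + i₁ := by rw [Nat.cast_sub (by omega)]; ring
      rw [hsplit]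
      linarith
    have hcard := card_le_card (insert_subset hi₂Q hsmall)
    rw [card_insert_of_notMem (by rw [mem_Icc]; omega), Nat.card_Icc] at hcard
    have := pred_card_le_card_erase (s := {i ∈ Icc 1 s | x * i ≤ E i}) (a := j)
    omega
  · calc m = #(Icc 1 m) := by simp
      _ ≤ _ := card_le_card fun i hi ↦ mem_erase.2 ⟨by rw [mem_Icc] at hi; omega, hsmall hi⟩

theorem card_chordSlope_le (he : ∀ i ∈ Icc 1 s, 0 ≤ e i)
    (he1 : ∑ i ∈ Icc 2 s, e i ≤ e 1) (hj : 1 ≤ j) (hjs : j ≤ s) {x : ℝ} (hx : 0 ≤ x) :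
    #{r ∈ (Icc 1 s).erase j | x ≤ |E r - E j| / |(r : ℝ) - j|} ≤
      #{i ∈ (Icc 1 s).erase j | x ≤ E i / i} := by
  convert card_steep_chords_le he he1 hj hjs hx using 1
  · rw [Icc_erase_eq_Ico_union_Ioc hj hjs, filter_union,
      card_union_of_disjoint (disjoint_filter_filter Ico_disjoint_Ioc_same)]
    congr 1 <;> refine congrArg card (filter_congr fun r hr ↦ ?_)
    · rw [mem_Ico] at hr
      have hrj : (r : ℝ) < j := by exact_mod_cast hr.2
      rw [abs_of_nonpos (sub_nonpos.2 (prefixSum_le_prefixSum he hr.2.le hjs)),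
        abs_of_neg (sub_neg.2 hrj), le_div_iff₀ (by linarith)]
      constructor <;> intro <;> linarith
    · rw [mem_Ioc] at hr
      have hjr : (j : ℝ) < r := by exact_mod_cast hr.1
      rw [abs_of_nonneg (sub_nonneg.2 (prefixSum_le_prefixSum he hr.1.le hr.2)),
        abs_of_pos (sub_pos.2 hjr), le_div_iff₀ (by linarith)]
      constructor <;> intro <;> linarith
  · refine congrArg card (filter_congr fun i hi ↦ le_div_iff₀ ?_)
    simp only [mem_erase, mem_Icc] at hi
    exact_mod_cast hi.2.1

theorem prod_one_add_chordSlope_le (he : ∀ i ∈ Icc 1 s, 0 ≤ e i)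
    (he1 : ∑ i ∈ Icc 2 s, e i ≤ e 1) (hj : 1 ≤ j) (hjs : j ≤ s) :
    ∏ i ∈ (Icc 1 s).erase j, (1 + |E i - E j| / |(i : ℝ) - j|) ≤
      ∏ i ∈ (Icc 1 s).erase j, (1 + E i / i) := by
  refine prod_le_prod_of_card_filter_le (fun r _ ↦ by positivity) fun r _ ↦ ?_
  simp only [add_le_add_iff_left]
  exact card_chordSlope_le he he1 hj hjs (by positivity)

theorem bfrak_eq (he : ∀ i ∈ Icc 1 s, 0 ≤ e i) (hj : 1 ≤ j) (hjs : j ≤ s) :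
    bfrak s j e = (∏ i ∈ (Icc 1 s).erase j, (i + E i)) /
      ∏ i ∈ (Icc 1 s).erase j, (|(i : ℝ) - j| + |E i - E j|) := by
  have hIco : Ico 1 j = Icc 1 (j - 1) := by
    rw [← Ico_add_one_right_eq_Icc, Nat.sub_add_cancel hj]
  rw [bfrak]
  congr 1
  rw [Icc_erase_eq_Ico_union_Ioc hj hjs, prod_union Ico_disjoint_Ioc_same, hIco,
    ← Icc_add_one_left_eq_Ioc]
  congr 1 <;> refine prod_congr rfl fun i hi ↦ ?_ <;> rw [mem_Icc] at hi
  · have hij : i ≤ j := by omega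
    rw [Icc_add_one_left_eq_Ioc, ← prefixSum_sub_prefixSum hij,
      abs_of_nonpos (sub_nonpos.2 (by exact_mod_cast hij)),
      abs_of_nonpos (sub_nonpos.2 (prefixSum_le_prefixSum he hij hjs))]
    ring
  · have hji : j ≤ i := by omega
    rw [Icc_add_one_left_eq_Ioc, ← prefixSum_sub_prefixSum hji,
      abs_of_nonneg (sub_nonneg.2 (by exact_mod_cast hji)),
      abs_of_nonneg (sub_nonneg.2 (prefixSum_le_prefixSum he hji hi.2))]

end PrefixSums

theorem bfrak_ge_choose_general (s : ℕ) (e : ℕ → ℝ)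
    (he : ∀ i ∈ Finset.Icc 1 s, 0 ≤ e i)
    (he1 : ∑ i ∈ Finset.Icc 2 s, e i ≤ e 1)
    (j : ℕ) (hj : 1 ≤ j) (hjs : j ≤ s) :
    (s.choose j : ℝ) ≤ bfrak s j e := by
  have hT : ∀ i ∈ (Icc 1 s).erase j, 0 < (i : ℝ) ∧ 0 < |(i : ℝ) - j| := fun i hi ↦ by
    simp only [mem_erase, mem_Icc] at hi
    exact ⟨by exact_mod_cast hi.2.1, abs_pos.2 (sub_ne_zero.2 (by exact_mod_cast hi.1))⟩
  have hslopes : 0 < ∏ i ∈ (Icc 1 s).erase j,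
      (1 + |prefixSum e i - prefixSum e j| / |(i : ℝ) - j|) := prod_pos fun i _ ↦ by positivity
  rw [bfrak_eq he hj hjs, prod_add_eq_prod_mul_prod_one_add_div fun i hi ↦ (hT i hi).1.ne',
    prod_add_eq_prod_mul_prod_one_add_div fun i hi ↦ (hT i hi).2.ne', mul_div_mul_comm,
    ← cast_choose_eq_prod_div_prod_abs_sub hj hjs]
  exact le_mul_of_one_le_right (Nat.cast_nonneg _)
    ((one_le_div hslopes).2 (prod_one_add_chordSlope_le he he1 hj hjs))

/-- If `e ∈ ℝ^s_{≥0}` and `e₁ ≥ e₂ + ⋯ + e_s`, then `𝔟ⱼ(e) ≥ C(s, j)` for all `1 ≤ j ≤ s`. -/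
theorem bfrak_ge_choose (s : ℕ) (hs : 1 ≤ s) (e : ℕ → ℝ)
    (he : ∀ i ∈ Finset.Icc 1 s, 0 ≤ e i)
    (he1 : ∑ i ∈ Finset.Icc 2 s, e i ≤ e 1)
    (j : ℕ) (hj : 1 ≤ j) (hjs : j ≤ s) :
    (s.choose j : ℝ) ≤ bfrak s j e :=
  bfrak_ge_choose_general s e he he1 j hj hjs
end

section
/- Let s ≥ 1 and let d_0 < d_1 < ⋯ < d_s be integers (a degree sequence) with d_0 ≤ 0 and d_s − s ≤ 2·d_1 − 2. Then for every integer 1 ≤ j ≤ s, ∏_{1 ≤ i ≤ s, i ≠ j} (d_i − d_0)/|d_i − d_j| ≥ binom(s, j). -/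
/-!
Put `x i = d i - d 0`, `a = x 1 - 1` and `n = x j`. Since the `d i` are strictly increasing
integers, `x i ≥ a + i` for `i < j`; the bound `d s - s ≤ 2 d 1 - 2` together with `d 0 ≤ 0`
gives `x i ≤ 2 a + i` for `i > j`. As `x ↦ x / (n - x)` increases and `x ↦ x / (x - n)`
decreases, each factor of the Betti number is at least the corresponding factor for these
extremal values. Writing `n = a + j + U`, `a = U + V`, `p = j - 1` and `q = s - j`, the
product of the extremal factors is a ratio of binomial coefficients, and the claim becomes
`C(s, j) C(U + p, p) C(V + q, q) ≤ C(U + V + p, p) C(2 (U + V) + p + 1 + q, q)`. This follows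
from the Vandermonde bound `C(U + p, p) C(V + q, q) ≤ C(U + V + p + q, p + q)` and an
induction on `q`.
-/

open Finset
open scoped Nat

namespace Finset

theorem prod_Ioc_eq_prod_range {M : Type*} [CommMonoid M] (f : ℕ → M) (j q : ℕ) :
    ∏ i ∈ Ioc j (j + q), f i = ∏ k ∈ range q, f (j + 1 + k) := by
  rw [← Ico_add_one_add_one_eq_Ioc, prod_Ico_eq_prod_range, add_right_comm, add_tsub_cancel_left]

theorem prod_Icc_erase_eq_mul {M : Type*} [CommMonoid M] (f : ℕ → M) {a j b : ℕ} (haj : a ≤ j)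
    (hjb : j ≤ b) : ∏ i ∈ (Icc a b).erase j, f i = (∏ i ∈ Ico a j, f i) * ∏ i ∈ Ioc j b, f i := by
  rw [← prod_union <| disjoint_left.2 fun i h₁ h₂ => by
    simp only [mem_Ico, mem_Ioc] at h₁ h₂; omega]
  congr 1
  ext i
  simp only [mem_erase, mem_Icc, mem_union, mem_Ico, mem_Ioc]
  omega

end Finset

namespace Nat

theorem choose_mul_choose_le_add_choose (a b p q : ℕ) :
    a.choose p * b.choose q ≤ (a + b).choose (p + q) := by
  rw [add_choose_eq]
  exact single_le_sum (f := fun ij : ℕ × ℕ => a.choose ij.1 * b.choose ij.2) (a := (p, q))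
    (fun _ _ => Nat.zero_le _) (mem_antidiagonal.2 rfl)

theorem choose_mul_choose_le_choose_mul_choose (m p q : ℕ) :
    (p + 1 + q).choose q * (m + p + q).choose (p + q) ≤
      (m + p).choose p * (2 * m + p + 1 + q).choose q := by
  induction q with
  | zero => simp
  | succ q ih =>
    have hA := add_one_mul_choose_eq (p + 1 + q) q
    have hB := add_one_mul_choose_eq (m + p + q) (p + q)
    have hC := add_one_mul_choose_eq (2 * m + p + 1 + q) q
    have hstep : (p + 1 + q + 1) * (m + p + q + 1) ≤ (p + q + 1) * (2 * m + p + 1 + q + 1) := by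
      nlinarith
    simp only [← add_assoc]
    refine Nat.le_of_mul_le_mul_right (c := (q + 1) * (p + q + 1)) ?_ (by positivity)
    calc _ = ((p + 1 + q + 1).choose (q + 1) * (q + 1)) *
            ((m + p + q + 1).choose (p + q + 1) * (p + q + 1)) := by ring
      _ = (p + 1 + q + 1) * (m + p + q + 1) *
            ((p + 1 + q).choose q * (m + p + q).choose (p + q)) := by rw [← hA, ← hB]; ring
      _ ≤ (p + q + 1) * (2 * m + p + 1 + q + 1) *
            ((m + p).choose p * (2 * m + p + 1 + q).choose q) := Nat.mul_le_mul hstep ih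
      _ = (m + p).choose p * ((2 * m + p + 1 + q + 1) * (2 * m + p + 1 + q).choose q) *
            (p + q + 1) := by ring
      _ = _ := by rw [hC]; ring

theorem choose_mul_choose_mul_choose_le (U V p q : ℕ) :
    (p + 1 + q).choose q * ((U + p).choose p * (V + q).choose q) ≤
      (U + V + p).choose p * (2 * (U + V) + p + 1 + q).choose q :=
  calc _ ≤ (p + 1 + q).choose q * (U + V + p + q).choose (p + q) := by
        grw [choose_mul_choose_le_add_choose, show U + p + (V + q) = U + V + p + q by ring]
    _ ≤ _ := choose_mul_choose_le_choose_mul_choose (U + V) p q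

theorem choose_mul_prod_le_prod {a n j s : ℕ} (hj : 1 ≤ j) (hjs : j ≤ s) (h₁ : a + j ≤ n)
    (h₂ : n ≤ 2 * a + j) :
    s.choose j * ((∏ i ∈ Ico 1 j, (n - a - i)) * ∏ i ∈ Ioc j s, (2 * a + i - n)) ≤
      (∏ i ∈ Ico 1 j, (a + i)) * ∏ i ∈ Ioc j s, (2 * a + i) := by
  obtain ⟨p, rfl⟩ : ∃ p, j = p + 1 := ⟨j - 1, by omega⟩
  obtain ⟨q, rfl⟩ : ∃ q, s = p + 1 + q := ⟨s - (p + 1), by omega⟩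
  obtain ⟨U, rfl⟩ := Nat.exists_eq_add_of_le h₁
  obtain ⟨V, rfl⟩ := Nat.exists_eq_add_of_le (by omega : U ≤ a)
  have hIco (f : ℕ → ℕ) : ∏ i ∈ Ico 1 (p + 1), f i = ∏ k ∈ range p, f (1 + k) := by
    rw [prod_Ico_eq_prod_range, add_tsub_cancel_right]
  have hden₁ : ∏ i ∈ Ico 1 (p + 1), (U + V + (p + 1) + U - (U + V) - i) =
      p ! * (U + p).choose p := by
    rw [hIco, ← descFactorial_eq_factorial_mul_choose, descFactorial_eq_prod_range]
    exact prod_congr rfl fun k _ => by omega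
  have hden₂ : ∏ i ∈ Ioc (p + 1) (p + 1 + q), (2 * (U + V) + i - (U + V + (p + 1) + U)) =
      q ! * (V + q).choose q := by
    rw [prod_Ioc_eq_prod_range, ← ascFactorial_eq_factorial_mul_choose,
      ascFactorial_eq_prod_range]
    exact prod_congr rfl fun k _ => by omega
  have hnum₁ : ∏ i ∈ Ico 1 (p + 1), (U + V + i) = p ! * (U + V + p).choose p := by
    rw [hIco, ← ascFactorial_eq_factorial_mul_choose, ascFactorial_eq_prod_range]
    exact prod_congr rfl fun k _ => by omega
  have hnum₂ : ∏ i ∈ Ioc (p + 1) (p + 1 + q), (2 * (U + V) + i) =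
      q ! * (2 * (U + V) + p + 1 + q).choose q := by
    rw [prod_Ioc_eq_prod_range, ← ascFactorial_eq_factorial_mul_choose,
      ascFactorial_eq_prod_range]
    exact prod_congr rfl fun k _ => by omega
  rw [hden₁, hden₂, hnum₁, hnum₂, choose_symm_add]
  calc _ = p ! * q ! * ((p + 1 + q).choose q * ((U + p).choose p * (V + q).choose q)) := by ring
    _ ≤ p ! * q ! * ((U + V + p).choose p * (2 * (U + V) + p + 1 + q).choose q) :=
        Nat.mul_le_mul_left _ (choose_mul_choose_mul_choose_le U V p q)
    _ = _ := by ring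

end Nat

theorem choose_le_prod_div_mul_prod_div {a n j s : ℕ} (hj : 1 ≤ j) (hjs : j ≤ s)
    (h₁ : a + j ≤ n) (h₂ : n ≤ 2 * a + j) :
    (s.choose j : ℝ) ≤ (∏ i ∈ Ico 1 j, (a + i : ℝ) / (n - a - i)) *
      ∏ i ∈ Ioc j s, (2 * a + i : ℝ) / (2 * a + i - n) := by
  have hden₁ : ∏ i ∈ Ico 1 j, (n - a - i : ℝ) = ((∏ i ∈ Ico 1 j, (n - a - i) : ℕ) : ℝ) := by
    rw [Nat.cast_prod]
    refine prod_congr rfl fun i hi => ?_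
    rw [mem_Ico] at hi
    rw [Nat.cast_sub (by omega), Nat.cast_sub (by omega)]
  have hden₂ :
      ∏ i ∈ Ioc j s, (2 * a + i - n : ℝ) = ((∏ i ∈ Ioc j s, (2 * a + i - n) : ℕ) : ℝ) := by
    rw [Nat.cast_prod]
    refine prod_congr rfl fun i hi => ?_
    rw [mem_Ioc] at hi
    push_cast [Nat.cast_sub (by omega : n ≤ 2 * a + i)]
    rfl
  have hpos : 0 < (∏ i ∈ Ico 1 j, (n - a - i)) * ∏ i ∈ Ioc j s, (2 * a + i - n) :=
    Nat.mul_pos (prod_pos fun i hi => by rw [mem_Ico] at hi; omega)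
      (prod_pos fun i hi => by rw [mem_Ioc] at hi; omega)
  rw [prod_div_distrib, prod_div_distrib, _root_.div_mul_div_comm, hden₁, hden₂,
    le_div_iff₀ (by exact_mod_cast hpos)]
  exact_mod_cast Nat.choose_mul_prod_le_prod hj hjs h₁ h₂

section DegreeSequence

variable {s : ℕ} {d : ℕ → ℤ}

theorem add_sub_le_of_lt_succ (hd : ∀ i < s, d i < d (i + 1)) {i k : ℕ} (hik : i ≤ k)
    (hks : k ≤ s) : d i + (k - i) ≤ d k := by
  induction k, hik using Nat.le_induction with
  | base => simp
  | succ k hik ih =>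
    have := hd k (by omega)
    have := ih (by omega)
    push_cast
    omega

theorem betti_factor_lower_bound_of_lt (hd : ∀ i < s, d i < d (i + 1)) {a n i j : ℕ}
    (ha : (a : ℤ) + 1 = d 1 - d 0) (hn : (n : ℤ) = d j - d 0) (hjs : j ≤ s) (hi : i ∈ Ico 1 j) :
    0 ≤ (a + i : ℝ) / (n - a - i) ∧
      (a + i : ℝ) / (n - a - i) ≤ ((d i : ℝ) - d 0) / |(d i : ℝ) - d j| := by
  rw [mem_Ico] at hi
  have hai : (a + i : ℝ) ≤ d i - d 0 := by
    have := add_sub_le_of_lt_succ hd hi.1 (by omega)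
    exact_mod_cast (by omega : (a : ℤ) + i ≤ d i - d 0)
  have hij : (d i : ℝ) < d j := by
    have := add_sub_le_of_lt_succ hd hi.2.le hjs
    exact_mod_cast (by omega : d i < d j)
  have hn' : (n : ℝ) = d j - d 0 := by exact_mod_cast hn
  rw [abs_of_neg (sub_neg.2 hij), hn']
  exact ⟨div_nonneg (by positivity) (by linarith),
    div_le_div₀ (by linarith) hai (by linarith) (by linarith)⟩

theorem betti_factor_lower_bound_of_gt (hd : ∀ i < s, d i < d (i + 1)) (hd0 : d 0 ≤ 0)
    (hreg : d s - s ≤ 2 * d 1 - 2) {a n i j : ℕ} (ha : (a : ℤ) + 1 = d 1 - d 0)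
    (hn : (n : ℤ) = d j - d 0) (hi : i ∈ Ioc j s) :
    0 ≤ (2 * a + i : ℝ) / (2 * a + i - n) ∧
      (2 * a + i : ℝ) / (2 * a + i - n) ≤ ((d i : ℝ) - d 0) / |(d i : ℝ) - d j| := by
  rw [mem_Ioc] at hi
  have hai : (d i : ℝ) - d 0 ≤ 2 * a + i := by
    have := add_sub_le_of_lt_succ hd hi.2 le_rfl
    exact_mod_cast (by omega : d i - d 0 ≤ 2 * (a : ℤ) + i)
  have hji : (d j : ℝ) < d i := by
    have := add_sub_le_of_lt_succ hd hi.1.le hi.2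
    exact_mod_cast (by omega : d j < d i)
  have hn' : (n : ℝ) = d j - d 0 := by exact_mod_cast hn
  have hn0 : (0 : ℝ) ≤ n := n.cast_nonneg
  rw [abs_of_pos (sub_pos.2 hji)]
  refine ⟨div_nonneg (by positivity) (by linarith), ?_⟩
  rw [div_le_div_iff₀ (by linarith) (by linarith)]
  nlinarith [mul_nonneg (sub_nonneg.2 hai) hn0]

end DegreeSequence

theorem pure_diagram_betti_ge_choose_general (s : ℕ) (d : ℕ → ℤ)
    (hmono : ∀ i < s, d i < d (i + 1))
    (hd0 : d 0 ≤ 0) (hreg : d s - (s : ℤ) ≤ 2 * d 1 - 2)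
    (j : ℕ) (hj : 1 ≤ j) (hjs : j ≤ s) :
    (s.choose j : ℝ) ≤
      ∏ i ∈ (Finset.Icc 1 s).erase j, ((d i : ℝ) - (d 0 : ℝ)) / |(d i : ℝ) - (d j : ℝ)| := by
  obtain ⟨a, ha⟩ : ∃ a : ℕ, (a : ℤ) + 1 = d 1 - d 0 :=
    ⟨(d 1 - d 0 - 1).toNat, by have := add_sub_le_of_lt_succ hmono zero_le_one (by omega); omega⟩
  obtain ⟨n, hn⟩ : ∃ n : ℕ, (n : ℤ) = d j - d 0 :=
    ⟨(d j - d 0).toNat, by have := add_sub_le_of_lt_succ hmono j.zero_le hjs; omega⟩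
  have h₁ : a + j ≤ n := by have := add_sub_le_of_lt_succ hmono hj hjs; omega
  have h₂ : n ≤ 2 * a + j := by have := add_sub_le_of_lt_succ hmono hjs le_rfl; omega
  have hL (i : ℕ) (hi : i ∈ Ico 1 j) := betti_factor_lower_bound_of_lt hmono ha hn hjs hi
  have hR (i : ℕ) (hi : i ∈ Ioc j s) := betti_factor_lower_bound_of_gt hmono hd0 hreg ha hn hi
  have hLprod := prod_le_prod (fun i hi => (hL i hi).1) (fun i hi => (hL i hi).2)
  have hRprod := prod_le_prod (fun i hi => (hR i hi).1) (fun i hi => (hR i hi).2)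
  rw [prod_Icc_erase_eq_mul _ hj hjs]
  exact (choose_le_prod_div_mul_prod_div hj hjs h₁ h₂).trans <| mul_le_mul hLprod hRprod
    (prod_nonneg fun i hi => (hR i hi).1) ((prod_nonneg fun i hi => (hL i hi).1).trans hLprod)

/-- Let `d₀ < d₁ < ⋯ < d_s` be a degree sequence with `d₀ ≤ 0` and `d_s − s ≤ 2·d₁ − 2`.
Then the `j`-th total Betti number of the normalized pure diagram of type `d`, namely
`∏_{1 ≤ i ≤ s, i ≠ j} (dᵢ − d₀)/|dᵢ − dⱼ|`, is at least `C(s, j)` for all `1 ≤ j ≤ s`. -/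
theorem pure_diagram_betti_ge_choose (s : ℕ) (hs : 1 ≤ s) (d : ℕ → ℤ)
    (hmono : ∀ i < s, d i < d (i + 1))
    (hd0 : d 0 ≤ 0) (hreg : d s - (s : ℤ) ≤ 2 * d 1 - 2)
    (j : ℕ) (hj : 1 ≤ j) (hjs : j ≤ s) :
    (s.choose j : ℝ) ≤
      ∏ i ∈ (Finset.Icc 1 s).erase j, ((d i : ℝ) - (d 0 : ℝ)) / |(d i : ℝ) - (d j : ℝ)| :=
  pure_diagram_betti_ge_choose_general s d hmono hd0 hreg j hj hjs
end

section
/- Let n ≥ 1 and 1 ≤ j ≤ n be integers. Then for all t ∈ [0,1] and all x ≥ 0, c_j(t, x) ≥ binom(n, j). -/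
/-!
Write `j = a + 1`, `n = a + 1 + b`, `s = t x`, `u = (1 - t) x`. In rising factorials `(c)_m`
the claim becomes `C(a+b+1, a+1) (1+s)_a (1+u)_b ≤ (1+s+u)_a (a+2+2(s+u))_b`, which is proved
by walking through the lattice points `(a, b)`. The step `(a, b) → (a, b+1)` preserves the
inequality when `(a+b+2) u ≤ 2(b+1)(s+u)`, and the step `(a, b) → (a+1, b)` when
`2b(s+u) ≤ (a+b+2) u`; one of them always applies, so every `(a, b)` is reached from `(0, 0)`.
-/

/-- The function `c_j(t, x) = (∏_{i=1}^{j−1} (i + x) · ∏_{i=j+1}^{n} (i + 2x)) /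
(∏_{i=1}^{j−1} (i + t·x) · ∏_{i=1}^{n−j} (i + (1−t)·x))`. -/
noncomputable def cfrak (n j : ℕ) (t x : ℝ) : ℝ :=
  ((∏ i ∈ Finset.Icc 1 (j - 1), ((i : ℝ) + x)) *
      ∏ i ∈ Finset.Icc (j + 1) n, ((i : ℝ) + 2 * x)) /
    ((∏ i ∈ Finset.Icc 1 (j - 1), ((i : ℝ) + t * x)) *
      ∏ i ∈ Finset.Icc 1 (n - j), ((i : ℝ) + (1 - t) * x))

open Finset Polynomial

theorem prod_Icc_natCast_add_eq_ascPochhammer_eval {R : Type*} [CommSemiring R]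
    (m b : ℕ) (c : R) :
    ∏ i ∈ Icc (m + 1) (m + b), ((i : R) + c) = (ascPochhammer R b).eval ((m : R) + 1 + c) := by
  induction b with
  | zero => simp
  | succ b ih =>
    rw [← add_assoc, prod_Icc_succ_top (by omega), ih, ascPochhammer_succ_eval]
    push_cast
    ring

theorem ascPochhammer_eval_mul_add_eq_mul_eval_add_one {R : Type*} [CommSemiring R] (n : ℕ)
    (c : R) :
    (ascPochhammer R n).eval c * (c + n) = c * (ascPochhammer R n).eval (c + 1) := by
  rw [← ascPochhammer_succ_eval, ascPochhammer_succ_left, eval_mul, eval_X, eval_comp,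
    eval_add, eval_X, eval_one]

noncomputable def cfrakNum (a b : ℕ) (x : ℝ) : ℝ :=
  (ascPochhammer ℝ a).eval (1 + x) * (ascPochhammer ℝ b).eval (a + 2 + 2 * x)

noncomputable def cfrakDen (a b : ℕ) (s u : ℝ) : ℝ :=
  (ascPochhammer ℝ a).eval (1 + s) * (ascPochhammer ℝ b).eval (1 + u)

theorem cfrak_eq_cfrakNum_div_cfrakDen (a b : ℕ) (t x : ℝ) :
    cfrak (a + 1 + b) (a + 1) t x = cfrakNum a b x / cfrakDen a b (t * x) ((1 - t) * x) := by
  have h₀ (k : ℕ) (c : ℝ) :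
      ∏ i ∈ Icc 1 k, ((i : ℝ) + c) = (ascPochhammer ℝ k).eval (1 + c) := by
    simpa using prod_Icc_natCast_add_eq_ascPochhammer_eval 0 k c
  have h₁ : ∏ i ∈ Icc (a + 1 + 1) (a + 1 + b), ((i : ℝ) + 2 * x) =
      (ascPochhammer ℝ b).eval (a + 2 + 2 * x) := by
    rw [prod_Icc_natCast_add_eq_ascPochhammer_eval]
    congr 1
    push_cast
    ring
  rw [cfrak, cfrakNum, cfrakDen, Nat.add_sub_cancel, Nat.add_sub_cancel_left,
    h₀, h₀, h₀, h₁]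

theorem cfrakNum_nonneg (a b : ℕ) {x : ℝ} (hx : 0 ≤ x) : 0 ≤ cfrakNum a b x :=
  (mul_pos (ascPochhammer_pos a _ (by positivity)) (ascPochhammer_pos b _ (by positivity))).le

theorem cfrakDen_pos (a b : ℕ) {s u : ℝ} (hs : 0 ≤ s) (hu : 0 ≤ u) : 0 < cfrakDen a b s u :=
  mul_pos (ascPochhammer_pos a _ (by positivity)) (ascPochhammer_pos b _ (by positivity))

theorem cfrakNum_succ_right (a b : ℕ) (x : ℝ) :
    cfrakNum a (b + 1) x = cfrakNum a b x * (a + b + 2 + 2 * x) := by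
  rw [cfrakNum, cfrakNum, ascPochhammer_succ_eval]
  ring

theorem cfrakDen_succ_right (a b : ℕ) (s u : ℝ) :
    cfrakDen a (b + 1) s u = cfrakDen a b s u * (b + 1 + u) := by
  rw [cfrakDen, cfrakDen, ascPochhammer_succ_eval]
  ring

theorem cfrakNum_succ_left (a b : ℕ) (x : ℝ) :
    (a + 2 + 2 * x) * cfrakNum (a + 1) b x =
      (a + 1 + x) * (a + b + 2 + 2 * x) * cfrakNum a b x := by
  have h := ascPochhammer_eval_mul_add_eq_mul_eval_add_one b ((a : ℝ) + 2 + 2 * x)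
  rw [cfrakNum, cfrakNum, ascPochhammer_succ_eval]
  push_cast
  rw [show (a : ℝ) + 1 + 2 + 2 * x = a + 2 + 2 * x + 1 by ring]
  linear_combination -(ascPochhammer ℝ a).eval (1 + x) * (a + 1 + x) * h

theorem cfrakDen_succ_left (a b : ℕ) (s u : ℝ) :
    cfrakDen (a + 1) b s u = cfrakDen a b s u * (a + 1 + s) := by
  rw [cfrakDen, cfrakDen, ascPochhammer_succ_eval]
  ring

theorem choose_mul_cfrakDen_succ_right {a b : ℕ} {s u : ℝ} (hs : 0 ≤ s) (hu : 0 ≤ u)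
    (h : ((a + b + 1).choose (a + 1) : ℝ) * cfrakDen a b s u ≤ cfrakNum a b (s + u))
    (hsu : (a + b + 2) * u ≤ 2 * (b + 1) * (s + u)) :
    ((a + (b + 1) + 1).choose (a + 1) : ℝ) * cfrakDen a (b + 1) s u ≤
      cfrakNum a (b + 1) (s + u) := by
  have hchoose : ((a + (b + 1) + 1).choose (a + 1) : ℝ) * (b + 1) =
      (a + b + 2) * (a + b + 1).choose (a + 1) := by
    have hN := Nat.choose_mul_succ_eq (a + b + 1) (a + 1)
    rw [show a + b + 1 + 1 - (a + 1) = b + 1 by omega] at hN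
    rw [show a + (b + 1) + 1 = a + b + 1 + 1 by omega]
    exact_mod_cast by linarith
  have hNum := cfrakNum_nonneg a b (add_nonneg hs hu)
  refine le_of_mul_le_mul_left ?_ (by positivity : (0 : ℝ) < b + 1)
  calc (b + 1 : ℝ) * (((a + (b + 1) + 1).choose (a + 1) : ℝ) * cfrakDen a (b + 1) s u)
      = (a + b + 2) * (b + 1 + u) * (((a + b + 1).choose (a + 1) : ℝ) * cfrakDen a b s u) := by
        rw [cfrakDen_succ_right]
        linear_combination (b + 1 + u) * cfrakDen a b s u * hchoose
    _ ≤ (a + b + 2) * (b + 1 + u) * cfrakNum a b (s + u) := by gcongr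
    _ ≤ (b + 1) * (a + b + 2 + 2 * (s + u)) * cfrakNum a b (s + u) := by
        gcongr ?_ * _
        linarith
    _ = (b + 1) * cfrakNum a (b + 1) (s + u) := by
        rw [cfrakNum_succ_right]
        ring

theorem choose_mul_cfrakDen_succ_left {a b : ℕ} {s u : ℝ} (hs : 0 ≤ s) (hu : 0 ≤ u)
    (h : ((a + b + 1).choose (a + 1) : ℝ) * cfrakDen a b s u ≤ cfrakNum a b (s + u))
    (hsu : 2 * b * (s + u) ≤ (a + b + 2) * u) :
    ((a + 1 + b + 1).choose (a + 1 + 1) : ℝ) * cfrakDen (a + 1) b s u ≤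
      cfrakNum (a + 1) b (s + u) := by
  have hscalar : (a + b + 2) * (a + 1 + s) * (a + 2 + 2 * (s + u)) ≤
      (a + 2) * (a + 1 + (s + u)) * (a + b + 2 + 2 * (s + u)) := by
    have hs' : (a + b + 2) * s ≤ (a + 2 - b) * (s + u) := by linarith
    -- with `hs'`, the right side exceeds the left by at least `2b(s+u)(1+s+u)`
    have hb : (0 : ℝ) ≤ b := b.cast_nonneg
    have hx : 0 ≤ s + u := add_nonneg hs hu
    nlinarith [mul_le_mul_of_nonneg_right hs' (by positivity : (0 : ℝ) ≤ a + 2 + 2 * (s + u)),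
      mul_nonneg hb hx, mul_nonneg hb (mul_nonneg hx hx)]
  have hchoose : ((a + 1 + b + 1).choose (a + 1 + 1) : ℝ) * (a + 2) =
      (a + b + 2) * (a + b + 1).choose (a + 1) := by
    have hN := Nat.add_one_mul_choose_eq (a + b + 1) (a + 1)
    rw [show a + 1 + b + 1 = a + b + 1 + 1 by omega]
    exact_mod_cast by linarith
  have hNum := cfrakNum_nonneg a b (add_nonneg hs hu)
  refine le_of_mul_le_mul_left ?_ (by positivity : (0 : ℝ) < (a + 2) * (a + 2 + 2 * (s + u)))
  calc (a + 2) * (a + 2 + 2 * (s + u)) *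
        (((a + 1 + b + 1).choose (a + 1 + 1) : ℝ) * cfrakDen (a + 1) b s u)
      = (a + b + 2) * (a + 1 + s) * (a + 2 + 2 * (s + u)) *
          (((a + b + 1).choose (a + 1) : ℝ) * cfrakDen a b s u) := by
        rw [cfrakDen_succ_left]
        linear_combination (a + 2 + 2 * (s + u)) * (a + 1 + s) * cfrakDen a b s u * hchoose
    _ ≤ (a + b + 2) * (a + 1 + s) * (a + 2 + 2 * (s + u)) * cfrakNum a b (s + u) := by gcongr
    _ ≤ (a + 2) * (a + 1 + (s + u)) * (a + b + 2 + 2 * (s + u)) * cfrakNum a b (s + u) := by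
        gcongr
    _ = (a + 2) * (a + 2 + 2 * (s + u)) * cfrakNum (a + 1) b (s + u) := by
        linear_combination -(a + 2 : ℝ) * cfrakNum_succ_left a b (s + u)

theorem choose_mul_cfrakDen_le_cfrakNum (a b : ℕ) {s u : ℝ} (hs : 0 ≤ s) (hu : 0 ≤ u) :
    ((a + b + 1).choose (a + 1) : ℝ) * cfrakDen a b s u ≤ cfrakNum a b (s + u) := by
  induction b generalizing a with
  | zero =>
    induction a with
    | zero => simp [cfrakDen, cfrakNum]
    | succ a ih =>
      exact choose_mul_cfrakDen_succ_left (b := 0) hs hu ih (by simp; positivity)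
  | succ b ihb =>
    induction a with
    | zero =>
      exact choose_mul_cfrakDen_succ_right (a := 0) hs hu (ihb 0) (by push_cast; nlinarith)
    | succ a iha =>
      by_cases hsu : (a + 1 + b + 2) * u ≤ 2 * (b + 1) * (s + u)
      · exact choose_mul_cfrakDen_succ_right (a := a + 1) hs hu (ihb (a + 1))
          (by push_cast; linarith)
      · exact choose_mul_cfrakDen_succ_left (b := b + 1) hs hu iha (by push_cast; linarith)

theorem cfrak_ge_choose_general (n j : ℕ) (hj : 1 ≤ j) (hjn : j ≤ n)
    (t x : ℝ) (ht0 : 0 ≤ t) (ht1 : t ≤ 1) (hx : 0 ≤ x) :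
    (n.choose j : ℝ) ≤ cfrak n j t x := by
  obtain ⟨a, rfl⟩ : ∃ a, j = a + 1 := ⟨j - 1, by omega⟩
  obtain ⟨b, rfl⟩ : ∃ b, n = a + 1 + b := ⟨n - (a + 1), by omega⟩
  have hs : 0 ≤ t * x := mul_nonneg ht0 hx
  have hu : 0 ≤ (1 - t) * x := mul_nonneg (by linarith) hx
  rw [cfrak_eq_cfrakNum_div_cfrakDen, le_div_iff₀ (cfrakDen_pos a b hs hu)]
  have key := choose_mul_cfrakDen_le_cfrakNum a b hs hu
  rwa [show t * x + (1 - t) * x = x by ring, add_right_comm] at key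

/-- For all `t ∈ [0,1]` and `x ≥ 0`, one has `c_j(t, x) ≥ C(n, j)`. -/
theorem cfrak_ge_choose (n j : ℕ) (hn : 1 ≤ n) (hj : 1 ≤ j) (hjn : j ≤ n)
    (t x : ℝ) (ht0 : 0 ≤ t) (ht1 : t ≤ 1) (hx : 0 ≤ x) :
    (n.choose j : ℝ) ≤ cfrak n j t x :=
  cfrak_ge_choose_general n j hj hjn t x ht0 ht1 hx
end

section
/- Let n ≥ 1 and 1 ≤ j ≤ n be integers and fix t ∈ [0,1]. Then the function x ↦ c_j(t, x) is nondecreasing on [0, ∞); equivalently, the partial derivative ∂c_j/∂x(t, x) is nonnegative for all (t, x) ∈ [0,1] × [0,∞). -/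
open Finset

namespace Multiset

variable {α : Type*} [LinearOrder α] {s t : Multiset α}

theorem exists_eq_cons_min (hs : s ≠ 0) : ∃ a s', s = a ::ₘ s' ∧ ∀ c ∈ s', a ≤ c := by
  obtain ⟨a, ha, hmin⟩ := s.toFinset.exists_min_image id (toFinset_nonempty.2 hs)
  obtain ⟨s', rfl⟩ := exists_cons_of_mem (mem_toFinset.1 ha)
  exact ⟨a, s', rfl, fun c hc => hmin c (mem_toFinset.2 (mem_cons_of_mem hc))⟩

theorem countP_le_countP_of_cons_cons {a b : α} (hba : b ≤ a) (hs : ∀ c ∈ s, a ≤ c)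
    (hcard : card s = card t) (h : ∀ u, (b ::ₘ t).countP (u ≤ ·) ≤ (a ::ₘ s).countP (u ≤ ·))
    (u : α) : t.countP (u ≤ ·) ≤ s.countP (u ≤ ·) := by
  by_cases hu : u ≤ a
  · rw [countP_eq_card.2 fun c hc => hu.trans (hs c hc), hcard]
    exact countP_le_card _ _
  · have hub : ¬u ≤ b := fun hub => hu (hub.trans hba)
    simpa [countP_cons, hu, hub] using h u

theorem rel_ge_of_countP_le (hcard : card s = card t)
    (h : ∀ u, t.countP (u ≤ ·) ≤ s.countP (u ≤ ·)) : s.Rel (· ≥ ·) t := by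
  induction hn : card t generalizing s t with
  | zero =>
    rw [card_eq_zero.1 hn, card_eq_zero.1 (hcard.trans hn)]
    exact .zero
  | succ n ih =>
    obtain ⟨a, s', rfl, hs'⟩ := exists_eq_cons_min (s := s) (by rintro rfl; simp_all)
    obtain ⟨b, t', rfl, ht'⟩ := exists_eq_cons_min (s := t) (by rintro rfl; simp_all)
    have hcard' : card s' = card t' := by simpa using hcard
    have hba : b ≤ a := by
      by_contra! hab
      have hb := h b
      rw [countP_eq_card.2 (by simpa using ht'), countP_cons_of_neg _ hab.not_ge] at hb
      have := hb.trans (countP_le_card _ _)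
      simp [hcard'] at this
    exact .cons hba (ih hcard' (countP_le_countP_of_cons_cons hba hs' hcard' h)
      (by simpa using hn))

end Multiset

theorem Nat.floor_add_floor_le_floor {R : Type*} [Semiring R] [LinearOrder R]
    [IsStrictOrderedRing R] [FloorSemiring R] {a b c : R} (ha : 0 ≤ a) (hb : 0 ≤ b)
    (habc : a + b ≤ c) : ⌊a⌋₊ + ⌊b⌋₊ ≤ ⌊c⌋₊ := by
  rw [le_floor_iff ((add_nonneg ha hb).trans habc), cast_add]
  exact (_root_.add_le_add (floor_le ha) (floor_le hb)).trans habc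

noncomputable def prodOneAddMul (s : Multiset ℝ) (x : ℝ) : ℝ := (s.map fun a => 1 + a * x).prod

theorem prodOneAddMul_cons (a : ℝ) (s : Multiset ℝ) (x : ℝ) :
    prodOneAddMul (a ::ₘ s) x = (1 + a * x) * prodOneAddMul s x := by
  simp [prodOneAddMul]

theorem prodOneAddMul_add (s t : Multiset ℝ) (x : ℝ) :
    prodOneAddMul (s + t) x = prodOneAddMul s x * prodOneAddMul t x := by
  simp [prodOneAddMul]

theorem prodOneAddMul_pos {s : Multiset ℝ} (hs : ∀ a ∈ s, 0 ≤ a) {x : ℝ} (hx : 0 ≤ x) :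
    0 < prodOneAddMul s x :=
  Multiset.prod_pos fun _ h => by
    obtain ⟨a, ha, rfl⟩ := Multiset.mem_map.1 h
    have := hs a ha
    positivity

theorem monotoneOn_one_add_mul_div_one_add_mul {a b : ℝ} (hb : 0 ≤ b) (hba : b ≤ a) :
    MonotoneOn (fun x => (1 + a * x) / (1 + b * x)) (Set.Ici 0) := by
  intro x (hx : 0 ≤ x) y (hy : 0 ≤ y) hxy
  have ha : 0 ≤ a := hb.trans hba
  rw [div_le_div_iff₀ (by positivity) (by positivity)]
  nlinarith [mul_nonneg (sub_nonneg.2 hba) (sub_nonneg.2 hxy)]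

theorem monotoneOn_prodOneAddMul_div {s t : Multiset ℝ} (hst : s.Rel (· ≥ ·) t)
    (ht : ∀ b ∈ t, 0 ≤ b) :
    MonotoneOn (fun x => prodOneAddMul s x / prodOneAddMul t x) (Set.Ici 0) := by
  induction hst with
  | zero => simpa [prodOneAddMul] using monotoneOn_const
  | @cons a b s t hab hst ih =>
    have hb : 0 ≤ b := ht b (Multiset.mem_cons_self b t)
    have ht' : ∀ c ∈ t, 0 ≤ c := fun c hc => ht c (Multiset.mem_cons_of_mem hc)
    have hs' : ∀ c ∈ s, 0 ≤ c := fun c hc => by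
      obtain ⟨d, hd, hcd⟩ := Multiset.exists_mem_of_rel_of_mem hst hc
      exact (ht' d hd).trans hcd
    have hsplit : (fun x => prodOneAddMul (a ::ₘ s) x / prodOneAddMul (b ::ₘ t) x) =
        (fun x => (1 + a * x) / (1 + b * x)) * fun x => prodOneAddMul s x / prodOneAddMul t x := by
      ext x
      rw [prodOneAddMul_cons, prodOneAddMul_cons, mul_div_mul_comm, Pi.mul_apply]
    rw [hsplit]
    refine (monotoneOn_one_add_mul_div_one_add_mul hb hab).mul (ih ht') ?_ ?_ <;>
      intro x (hx : 0 ≤ x)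
    · have := hb.trans hab
      positivity
    · exact (div_pos (prodOneAddMul_pos hs' hx) (prodOneAddMul_pos ht' hx)).le

noncomputable def slopes (c : ℝ) (I : Finset ℕ) : Multiset ℝ := I.val.map fun i : ℕ => c / (i : ℝ)

theorem card_slopes (c : ℝ) (I : Finset ℕ) : Multiset.card (slopes c I) = #I := by
  simp [slopes]

theorem slopes_nonneg {c : ℝ} (hc : 0 ≤ c) (I : Finset ℕ) : ∀ a ∈ slopes c I, 0 ≤ a := by
  simp only [slopes, Multiset.mem_map, Finset.mem_val]
  rintro _ ⟨i, -, rfl⟩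
  positivity

theorem prod_natCast_add_mul (c x : ℝ) {I : Finset ℕ} (hI : 0 ∉ I) :
    ∏ i ∈ I, ((i : ℝ) + c * x) = (∏ i ∈ I, (i : ℝ)) * prodOneAddMul (slopes c I) x := by
  rw [prodOneAddMul, slopes, Multiset.map_map, ← Finset.prod_eq_multiset_prod,
    ← Finset.prod_mul_distrib]
  refine Finset.prod_congr rfl fun i hi => ?_
  have : (i : ℝ) ≠ 0 := Nat.cast_ne_zero.2 (ne_of_mem_of_not_mem hi hI)
  simp only [Function.comp_apply]
  field_simp

theorem countP_slopes_Icc {c u : ℝ} (hc : 0 ≤ c) (hu : 0 < u) {a : ℕ} (ha : 0 < a) (b : ℕ) :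
    (slopes c (Icc a b)).countP (u ≤ ·) = min b ⌊c / u⌋₊ + 1 - a := by
  rw [slopes, Multiset.countP_map, ← Finset.filter_val, ← Finset.card_def]
  have hfilter : (Icc a b).filter (fun i : ℕ => u ≤ c / i) = Icc a (min b ⌊c / u⌋₊) := by
    ext i
    simp only [Finset.mem_filter, Finset.mem_Icc, le_min_iff]
    have hi : (0 : ℝ) < i ↔ 0 < i := Nat.cast_pos
    constructor
    · rintro ⟨⟨h1, h2⟩, h3⟩
      refine ⟨h1, h2, (Nat.le_floor_iff (by positivity)).2 ?_⟩
      rwa [le_div_iff₀ hu, mul_comm, ← le_div_iff₀ (hi.2 (by omega))]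
    · rintro ⟨h1, h2, h3⟩
      refine ⟨⟨h1, h2⟩, ?_⟩
      rwa [Nat.le_floor_iff (by positivity), le_div_iff₀ hu, mul_comm,
        ← le_div_iff₀ (hi.2 (by omega))] at h3
  rw [hfilter, Nat.card_Icc]

noncomputable def cfrakNumSlopes (n j : ℕ) : Multiset ℝ :=
  slopes 1 (Icc 1 (j - 1)) + slopes 2 (Icc (j + 1) n)

noncomputable def cfrakDenSlopes (n j : ℕ) (t : ℝ) : Multiset ℝ :=
  slopes t (Icc 1 (j - 1)) + slopes (1 - t) (Icc 1 (n - j))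

theorem cfrak_eq_cfrak_zero_mul (n j : ℕ) (t x : ℝ) :
    cfrak n j t x = cfrak n j t 0 *
      (prodOneAddMul (cfrakNumSlopes n j) x / prodOneAddMul (cfrakDenSlopes n j t) x) := by
  have h1 : 0 ∉ Icc 1 (j - 1) := by simp
  have h2 : 0 ∉ Icc 1 (n - j) := by simp
  have h3 : 0 ∉ Icc (j + 1) n := by simp
  have hone : ∏ i ∈ Icc 1 (j - 1), ((i : ℝ) + x) = ∏ i ∈ Icc 1 (j - 1), ((i : ℝ) + 1 * x) := by
    simp only [one_mul]
  simp only [cfrak, cfrakNumSlopes, cfrakDenSlopes, mul_zero, add_zero, prodOneAddMul_add]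
  rw [hone, prod_natCast_add_mul _ _ h1, prod_natCast_add_mul _ _ h1,
    prod_natCast_add_mul _ _ h2, prod_natCast_add_mul _ _ h3]
  ring

theorem cfrak_zero_nonneg (n j : ℕ) (t : ℝ) : 0 ≤ cfrak n j t 0 := by
  simp only [cfrak, mul_zero, add_zero]
  positivity

theorem card_cfrakNumSlopes (n j : ℕ) (t : ℝ) :
    Multiset.card (cfrakNumSlopes n j) = Multiset.card (cfrakDenSlopes n j t) := by
  simp only [cfrakNumSlopes, cfrakDenSlopes, Multiset.card_add, card_slopes, Nat.card_Icc]
  omega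

theorem cfrakDenSlopes_nonneg {t : ℝ} (ht0 : 0 ≤ t) (ht1 : t ≤ 1) (n j : ℕ) :
    ∀ b ∈ cfrakDenSlopes n j t, 0 ≤ b := by
  intro b hb
  rcases Multiset.mem_add.1 hb with hb | hb
  · exact slopes_nonneg ht0 _ b hb
  · exact slopes_nonneg (by linarith) _ b hb

theorem countP_cfrakDenSlopes_le {t : ℝ} (ht0 : 0 ≤ t) (ht1 : t ≤ 1) (n j : ℕ) (u : ℝ) :
    (cfrakDenSlopes n j t).countP (u ≤ ·) ≤ (cfrakNumSlopes n j).countP (u ≤ ·) := by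
  rcases le_or_gt u 0 with hu | hu
  · refine (Multiset.countP_le_card _ _).trans_eq ?_
    rw [eq_comm, Multiset.countP_eq_card.2, card_cfrakNumSlopes n j t]
    intro a ha
    rcases Multiset.mem_add.1 ha with ha | ha
    · exact hu.trans (slopes_nonneg zero_le_one _ a ha)
    · exact hu.trans (slopes_nonneg zero_le_two _ a ha)
  · simp only [cfrakNumSlopes, cfrakDenSlopes, Multiset.countP_add]
    rw [countP_slopes_Icc ht0 hu one_pos, countP_slopes_Icc (by linarith) hu one_pos,
      countP_slopes_Icc zero_le_one hu one_pos, countP_slopes_Icc zero_le_two hu (by omega)]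
    have h1 : ⌊t / u⌋₊ + ⌊(1 - t) / u⌋₊ ≤ ⌊1 / u⌋₊ :=
      Nat.floor_add_floor_le_floor (by positivity) (div_nonneg (by linarith) hu.le)
        (by rw [← add_div]; simp)
    have h2 : ⌊(1 - t) / u⌋₊ + ⌊1 / u⌋₊ ≤ ⌊2 / u⌋₊ :=
      Nat.floor_add_floor_le_floor (div_nonneg (by linarith) hu.le) (by positivity)
        (by rw [← add_div]; gcongr; linarith)
    omega

theorem cfrak_monotoneOn_general (n j : ℕ)
    (t : ℝ) (ht0 : 0 ≤ t) (ht1 : t ≤ 1) :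
    MonotoneOn (fun x => cfrak n j t x) (Set.Ici (0 : ℝ)) := by
  have hrel : (cfrakNumSlopes n j).Rel (· ≥ ·) (cfrakDenSlopes n j t) :=
    Multiset.rel_ge_of_countP_le (card_cfrakNumSlopes n j t) (countP_cfrakDenSlopes_le ht0 ht1 n j)
  intro x hx y hy hxy
  dsimp only
  rw [cfrak_eq_cfrak_zero_mul n j t x, cfrak_eq_cfrak_zero_mul n j t y]
  exact mul_le_mul_of_nonneg_left
    (monotoneOn_prodOneAddMul_div hrel (cfrakDenSlopes_nonneg ht0 ht1 n j) hx hy hxy)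
    (cfrak_zero_nonneg n j t)

/-- For fixed `t ∈ [0,1]`, the function `x ↦ c_j(t, x)` is nondecreasing on `[0, ∞)`. -/
theorem cfrak_monotoneOn (n j : ℕ) (hn : 1 ≤ n) (hj : 1 ≤ j) (hjn : j ≤ n)
    (t : ℝ) (ht0 : 0 ≤ t) (ht1 : t ≤ 1) :
    MonotoneOn (fun x => cfrak n j t x) (Set.Ici (0 : ℝ)) :=
  cfrak_monotoneOn_general n j t ht0 ht1
end
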